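/- (Orthoplex bound, real case) If φ_1,...,φ_n are unit vectors in ℝ^m with n > m(m+1)/2, then max_{j≠l} |⟨φ_j, φ_l⟩| ≥ 1/√m. -/

import Mathlib

/-!
The map `φ ↦ φ φᵀ - I / m` sends unit vectors to traceless symmetric matrices, a space of
dimension `m(m+1)/2 - 1`, and `⟪φ φᵀ - I/m, ψ ψᵀ - I/m⟫ = ⟪φ, ψ⟫² - 1/m` for the Frobenius inner
product. If the coherence were below `1/√m`, the `n` images would be pairwise at obtuse angles;
but a space of dimension `d` holds at most `d + 1` pairwise obtuse vectors.
-/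

open scoped InnerProductSpace

/-- The coherence of a family of vectors: the supremum of absolute pairwise inner products. -/
noncomputable def coherence (𝕜 : Type*) {E : Type*} [RCLike 𝕜] [NormedAddCommGroup E]
    [InnerProductSpace 𝕜 E] {n : ℕ} (φ : Fin n → E) : ℝ :=
  sSup {r : ℝ | ∃ j l : Fin n, j ≠ l ∧ r = ‖(⟪φ j, φ l⟫_𝕜 : 𝕜)‖}

open Module

theorem norm_inner_le_coherence {𝕜 E : Type*} [RCLike 𝕜] [NormedAddCommGroup E]
    [InnerProductSpace 𝕜 E] {n : ℕ} (φ : Fin n → E) {j l : Fin n} (hjl : j ≠ l) :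
    ‖⟪φ j, φ l⟫_𝕜‖ ≤ coherence 𝕜 φ := by
  refine le_csSup ?_ ⟨j, l, hjl, rfl⟩
  refine (Set.finite_range fun p : Fin n × Fin n => ‖⟪φ p.1, φ p.2⟫_𝕜‖).subset ?_ |>.bddAbove
  rintro r ⟨j, l, -, rfl⟩
  exact ⟨(j, l), rfl⟩

section Obtuse

variable {E ι : Type*} [NormedAddCommGroup E] [InnerProductSpace ℝ E] [Fintype ι]

/-- The positive part `p` of the relation equals minus its negative part, so `⟪p, p⟫ ≤ 0`. -/
theorem sum_filter_pos_smul_eq_zero {x : ι → E} (hx : Pairwise fun i j => ⟪x i, x j⟫_ℝ ≤ 0)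
    {c : ι → ℝ} (hc : ∑ i, c i • x i = 0) : ∑ i with 0 < c i, c i • x i = 0 := by
  classical
  set p := ∑ i with 0 < c i, c i • x i
  have hp : p = ∑ i with ¬0 < c i, (-c i) • x i := by
    rw [← Finset.sum_filter_add_sum_filter_not _ (fun i => 0 < c i)] at hc
    simp only [neg_smul, Finset.sum_neg_distrib]
    exact eq_neg_of_add_eq_zero_left hc
  rw [← real_inner_self_nonpos]
  nth_rewrite 2 [hp]
  simp only [p, sum_inner, inner_sum, real_inner_smul_left, real_inner_smul_right]
  refine Finset.sum_nonpos fun j hj => Finset.sum_nonpos fun i hi => ?_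
  rw [Finset.mem_filter] at hi hj
  have hij : i ≠ j := fun h => hj.2 (h ▸ hi.2)
  exact mul_nonpos_of_nonneg_of_nonpos (neg_nonneg.mpr (not_lt.mp hj.2))
    (mul_nonpos_of_nonneg_of_nonpos hi.2.le (hx hij))

theorem linearIndependent_of_pairwise_inner_nonpos {x : ι → E}
    (hx : Pairwise fun i j => ⟪x i, x j⟫_ℝ ≤ 0) {v : E} (hv : ∀ i, ⟪v, x i⟫_ℝ < 0) :
    LinearIndependent ℝ x := by
  classical
  have nonpos : ∀ c : ι → ℝ, ∑ i, c i • x i = 0 → ∀ i, c i ≤ 0 := by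
    intro c hc
    by_contra! hpos
    have hneg : ⟪v, ∑ i with 0 < c i, c i • x i⟫_ℝ < 0 := by
      rw [inner_sum]
      refine Finset.sum_neg (fun i hi => ?_) (by simpa [Finset.Nonempty] using hpos)
      rw [real_inner_smul_right]
      exact mul_neg_of_pos_of_neg (by simpa using hi) (hv i)
    rw [sum_filter_pos_smul_eq_zero hx hc, inner_zero_right] at hneg
    exact lt_irrefl 0 hneg
  refine Fintype.linearIndependent_iff.mpr fun c hc i => le_antisymm (nonpos c hc i) ?_
  simpa using nonpos (-c) (by simp [neg_smul, hc]) i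

theorem card_le_finrank_add_one_of_pairwise_inner_neg [FiniteDimensional ℝ E] {x : ι → E}
    (hx : Pairwise fun i j => ⟪x i, x j⟫_ℝ < 0) : Fintype.card ι ≤ finrank ℝ E + 1 := by
  classical
  rcases isEmpty_or_nonempty ι with hι | ⟨⟨i₀⟩⟩
  · simp
  have hli : LinearIndependent ℝ fun i : {i // i ≠ i₀} => x i :=
    linearIndependent_of_pairwise_inner_nonpos
      (fun i j hij => (hx (Subtype.coe_ne_coe.mpr hij)).le) (v := x i₀) fun i => hx (Ne.symm i.2)
  have hcard := hli.fintype_card_le_finrank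
  rw [Fintype.card_subtype_compl, Fintype.card_subtype_eq] at hcard
  omega

end Obtuse

/-! Matrices indexed by `ι` are modelled as vectors of `EuclideanSpace ℝ (ι × ι)`, so that the
inner product is the Frobenius one; `outer φ` is `φ φᵀ` and `idVec ι` is the identity matrix. -/

section Matrices

variable {ι : Type*}

noncomputable def outer (φ : EuclideanSpace ℝ ι) : EuclideanSpace ℝ (ι × ι) :=
  WithLp.toLp 2 fun p => φ p.1 * φ p.2

variable (ι) in
def idVec [DecidableEq ι] : EuclideanSpace ℝ (ι × ι) :=
  WithLp.toLp 2 fun p => if p.1 = p.2 then 1 else 0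

variable (ι) in
/-- A matrix is symmetric iff its entries factor through unordered pairs of indices. -/
noncomputable def symmetricSubspace : Submodule ℝ (EuclideanSpace ℝ (ι × ι)) :=
  LinearMap.range ((WithLp.linearEquiv 2 ℝ (ι × ι → ℝ)).symm.toLinearMap ∘ₗ
    LinearMap.funLeft ℝ ℝ fun p : ι × ι => s(p.1, p.2))

theorem outer_mem_symmetricSubspace (φ : EuclideanSpace ℝ ι) : outer φ ∈ symmetricSubspace ι :=
  ⟨Sym2.lift ⟨fun a b => φ a * φ b, fun _ _ => mul_comm _ _⟩, rfl⟩

theorem idVec_mem_symmetricSubspace [DecidableEq ι] : idVec ι ∈ symmetricSubspace ι :=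
  ⟨fun z => if z.IsDiag then 1 else 0, by ext p; simp [idVec, LinearMap.funLeft]⟩

variable [Fintype ι]

theorem inner_outer_outer (φ ψ : EuclideanSpace ℝ ι) :
    ⟪outer φ, outer ψ⟫_ℝ = ⟪φ, ψ⟫_ℝ ^ 2 := by
  simp only [outer, PiLp.inner_apply, RCLike.inner_apply, conj_trivial, Fintype.sum_prod_type,
    sq, Finset.sum_mul_sum]
  exact Finset.sum_congr rfl fun a _ => Finset.sum_congr rfl fun b _ => by ring

variable (ι) in
theorem finrank_symmetricSubspace_le :
    finrank ℝ (symmetricSubspace ι) ≤ (Fintype.card ι + 1).choose 2 :=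
  calc finrank ℝ (symmetricSubspace ι) ≤ finrank ℝ (Sym2 ι → ℝ) := LinearMap.finrank_range_le _
    _ = (Fintype.card ι + 1).choose 2 := by rw [finrank_fintype_fun_eq_card, Sym2.card]

variable [DecidableEq ι]

variable (ι) in
noncomputable def tracelessSymmetricSubspace : Submodule ℝ (EuclideanSpace ℝ (ι × ι)) :=
  symmetricSubspace ι ⊓ (ℝ ∙ idVec ι)ᗮ

theorem inner_idVec_outer (φ : EuclideanSpace ℝ ι) : ⟪idVec ι, outer φ⟫_ℝ = ‖φ‖ ^ 2 := by
  rw [← real_inner_self_eq_norm_sq]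
  simp only [idVec, outer, PiLp.inner_apply, RCLike.inner_apply, conj_trivial,
    Fintype.sum_prod_type]
  exact Finset.sum_congr rfl fun a _ => by simp

theorem inner_idVec_self : ⟪idVec ι, idVec ι⟫_ℝ = Fintype.card ι := by
  simp only [idVec, PiLp.inner_apply, RCLike.inner_apply, conj_trivial, Fintype.sum_prod_type]
  simp

variable (ι) in
theorem finrank_tracelessSymmetricSubspace_lt [Nonempty ι] :
    finrank ℝ (tracelessSymmetricSubspace ι) < (Fintype.card ι + 1).choose 2 := by
  refine (Submodule.finrank_lt_finrank_of_lt ?_).trans_le (finrank_symmetricSubspace_le ι)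
  refine SetLike.lt_iff_le_and_exists.mpr ⟨inf_le_left, idVec ι, idVec_mem_symmetricSubspace, ?_⟩
  rw [tracelessSymmetricSubspace, Submodule.mem_inf,
    Submodule.mem_orthogonal_singleton_iff_inner_right, inner_idVec_self]
  simp

noncomputable def tracelessPart (φ : EuclideanSpace ℝ ι) : EuclideanSpace ℝ (ι × ι) :=
  outer φ - (Fintype.card ι : ℝ)⁻¹ • idVec ι

variable [Nonempty ι] {φ ψ : EuclideanSpace ℝ ι}

theorem tracelessPart_mem (hφ : ‖φ‖ = 1) : tracelessPart φ ∈ tracelessSymmetricSubspace ι := by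
  refine ⟨sub_mem (outer_mem_symmetricSubspace φ)
    (Submodule.smul_mem _ _ idVec_mem_symmetricSubspace), ?_⟩
  rw [SetLike.mem_coe, Submodule.mem_orthogonal_singleton_iff_inner_right, tracelessPart,
    inner_sub_right, real_inner_smul_right, inner_idVec_outer, inner_idVec_self, hφ]
  field_simp
  ring

theorem inner_tracelessPart (hφ : ‖φ‖ = 1) (hψ : ‖ψ‖ = 1) :
    ⟪tracelessPart φ, tracelessPart ψ⟫_ℝ = ⟪φ, ψ⟫_ℝ ^ 2 - (Fintype.card ι : ℝ)⁻¹ := by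
  simp only [tracelessPart, inner_sub_left, inner_sub_right, real_inner_smul_left,
    real_inner_smul_right, inner_outer_outer, real_inner_comm (idVec ι) (outer φ),
    inner_idVec_outer, inner_idVec_self, hφ, hψ]
  field_simp
  ring

end Matrices

/-- Orthoplex bound (real case): more than `m(m+1)/2` unit vectors in `ℝ^m` have coherence at
least `1/√m`. -/
theorem orthoplex_bound_real (m n : ℕ) (hm : 0 < m) (hn : m * (m + 1) / 2 < n)
    (φ : Fin n → EuclideanSpace ℝ (Fin m)) (hunit : ∀ j, ‖φ j‖ = 1) :
    coherence ℝ φ ≥ 1 / Real.sqrt m := by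
  have : Nonempty (Fin m) := ⟨⟨0, hm⟩⟩
  by_contra! hlt
  have hobtuse : Pairwise fun j l => ⟪tracelessPart (φ j), tracelessPart (φ l)⟫_ℝ < 0 := by
    intro j l hjl
    rw [inner_tracelessPart (hunit j) (hunit l), Fintype.card_fin, sub_neg, ← sq_abs]
    calc |⟪φ j, φ l⟫_ℝ| ^ 2 < (1 / Real.sqrt m) ^ 2 := by
          gcongr
          exact (norm_inner_le_coherence φ hjl).trans_lt hlt
      _ = (m : ℝ)⁻¹ := by rw [div_pow, one_pow, Real.sq_sqrt m.cast_nonneg, one_div]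
  have hcard := card_le_finrank_add_one_of_pairwise_inner_neg
    (x := fun j => (⟨_, tracelessPart_mem (hunit j)⟩ : tracelessSymmetricSubspace (Fin m))) hobtuse
  have hdim := finrank_tracelessSymmetricSubspace_lt (Fin m)
  rw [Fintype.card_fin, Nat.choose_two_right, Nat.add_sub_cancel, mul_comm] at hdim
  rw [Fintype.card_fin] at hcard
  omega
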